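/- arXiv:1306.3088 — 2 statements merged into one kernel-verified Lean document; each statement's English description precedes it below -/
import Mathlib

section
/- If a cubic graph G with m edges has a 2-regular subgraph C and a cycle double cover 𝒞 of G such that the cycles of C are members of 𝒞, then G has a (1,2)-cycle cover of length 2m − |E(C)|. -/
open scoped Classical

namespace ShortCycleCovers

variable {V : Type*}

/-- A cycle in `G`: a connected 2-regular subgraph. -/
def IsCycleSub {G : SimpleGraph V} (C : G.Subgraph) : Prop :=
  C.Connected ∧ ∀ v ∈ C.verts, (C.neighborSet v).ncard = 2

/-- A cycle cover of `G`: a family of cycles covering every edge at least once. -/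
def IsCycleCover (G : SimpleGraph V) (𝒞 : Multiset G.Subgraph) : Prop :=
  (∀ C ∈ 𝒞, IsCycleSub C) ∧ ∀ e ∈ G.edgeSet, ∃ C ∈ 𝒞, e ∈ C.edgeSet

/-- The length of a family of cycles: the sum of the numbers of edges of its members. -/
noncomputable def coverLength {G : SimpleGraph V} (𝒞 : Multiset G.Subgraph) : ℕ :=
  (𝒞.map fun C => C.edgeSet.ncard).sum

/-- The weight of an edge w.r.t. a family of cycles: the number of members containing it. -/
noncomputable def edgeWeight {G : SimpleGraph V} (𝒞 : Multiset G.Subgraph) (e : Sym2 V) : ℕ :=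
  (𝒞.map fun C => if e ∈ C.edgeSet then 1 else 0).sum

/-- A cycle double cover: a family of cycles covering every edge exactly twice. -/
def IsCDC (G : SimpleGraph V) (𝒞 : Multiset G.Subgraph) : Prop :=
  (∀ C ∈ 𝒞, IsCycleSub C) ∧ ∀ e ∈ G.edgeSet, edgeWeight 𝒞 e = 2

/-- The length of a shortest cycle cover of `G`. -/
noncomputable def scc (G : SimpleGraph V) : ℕ :=
  sInf {L : ℕ | ∃ 𝒞 : Multiset G.Subgraph, IsCycleCover G 𝒞 ∧ coverLength 𝒞 = L}

/-- A cubic graph: every vertex has degree 3. -/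
def IsCubic (G : SimpleGraph V) : Prop := ∀ v : V, (G.neighborSet v).ncard = 3

/-- A bridgeless graph: no cut edge. -/
def Bridgeless (G : SimpleGraph V) : Prop := ∀ e ∈ G.edgeSet, ¬ G.IsBridge e


lemma edgeWeight_add {G : SimpleGraph V} (s t : Multiset G.Subgraph) (e : Sym2 V) :
    edgeWeight (s + t) e = edgeWeight s e + edgeWeight t e := by
  simp [edgeWeight]

lemma coverLength_add {G : SimpleGraph V} (s t : Multiset G.Subgraph) :
    coverLength (s + t) = coverLength s + coverLength t := by
  simp [coverLength]

lemma edgeWeight_eq_countP {G : SimpleGraph V} (s : Multiset G.Subgraph) (e : Sym2 V) :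
    edgeWeight s e = s.countP (fun D => e ∈ D.edgeSet) := by
  induction s using Multiset.induction with
  | empty => simp [edgeWeight]
  | cons C s ih =>
    simp only [edgeWeight, Multiset.map_cons, Multiset.sum_cons, Multiset.countP_cons] at *
    rw [ih]
    by_cases h : e ∈ C.edgeSet <;> simp [h] <;> omega

lemma ncard_edgeSet_eq_sum [Fintype V] {G : SimpleGraph V} (D : G.Subgraph) :
    D.edgeSet.ncard = ∑ e ∈ G.edgeSet.toFinset, (if e ∈ D.edgeSet then 1 else 0) := by
  classical
  have heq : D.edgeSet = ↑(G.edgeSet.toFinset.filter (fun e => e ∈ D.edgeSet)) := by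
    ext e
    simp only [Finset.coe_filter, Set.mem_toFinset, Set.mem_setOf_eq]
    exact ⟨fun h => ⟨D.edgeSet_subset h, h⟩, fun h => h.2⟩
  rw [← Finset.card_filter]
  conv_lhs => rw [heq]
  exact Set.ncard_coe_finset _

lemma coverLength_eq_sum [Fintype V] {G : SimpleGraph V} (s : Multiset G.Subgraph) :
    coverLength s = ∑ e ∈ G.edgeSet.toFinset, edgeWeight s e := by
  induction s using Multiset.induction with
  | empty => simp [coverLength, edgeWeight]
  | cons C s ih =>
    have h1 : coverLength (C ::ₘ s) = C.edgeSet.ncard + coverLength s := by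
      simp [coverLength]
    have h2 : ∀ e, edgeWeight (C ::ₘ s) e
        = (if e ∈ C.edgeSet then 1 else 0) + edgeWeight s e := by
      intro e; simp [edgeWeight]
    rw [h1, ih, ncard_edgeSet_eq_sum]
    simp only [h2]
    rw [Finset.sum_add_distrib]

/-- If a cubic graph `G` has a 2-regular subgraph `C` and a CDC `𝒞` such that the
cycles of `C` are members of `𝒞`, then `G` has a (1,2)-cycle cover of length
`2m - |E(C)|`. -/
theorem statement1 [Fintype V] (G : SimpleGraph V) (hcubic : IsCubic G)
    (C : G.Subgraph) (h2reg : ∀ v ∈ C.verts, (C.neighborSet v).ncard = 2)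
    (𝒞 : Multiset G.Subgraph) (hcdc : IsCDC G 𝒞)
    (𝒟 : Multiset G.Subgraph) (hsub : 𝒟 ≤ 𝒞)
    (hdisj : ∀ D₁ ∈ 𝒟, ∀ D₂ ∈ 𝒟, D₁ = D₂ ∨ Disjoint D₁.verts D₂.verts)
    (hverts : ∀ v : V, v ∈ C.verts ↔ ∃ D ∈ 𝒟, v ∈ D.verts)
    (hedges : ∀ e : Sym2 V, e ∈ C.edgeSet ↔ ∃ D ∈ 𝒟, e ∈ D.edgeSet) :
    ∃ ℱ : Multiset G.Subgraph, IsCycleCover G ℱ ∧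
      (∀ e ∈ G.edgeSet, edgeWeight ℱ e = 1 ∨ edgeWeight ℱ e = 2) ∧
      coverLength ℱ = 2 * G.edgeSet.ncard - C.edgeSet.ncard := by
  classical
  set 𝒟' : Multiset G.Subgraph := 𝒟.dedup with h𝒟'
  have hmem' : ∀ D : G.Subgraph, D ∈ 𝒟' ↔ D ∈ 𝒟 := fun D => Multiset.mem_dedup
  have hle : 𝒟' ≤ 𝒞 := le_trans (Multiset.dedup_le 𝒟) hsub
  set ℱ : Multiset G.Subgraph := 𝒞 - 𝒟' with hℱ
  have hsplit : ℱ + 𝒟' = 𝒞 := tsub_add_cancel_of_le hle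
  have hℱle : ℱ ≤ 𝒞 := tsub_le_self
  have hw𝒟 : ∀ e ∈ C.edgeSet, edgeWeight 𝒟' e = 1 := by
    intro e he
    obtain ⟨D₀, hD₀, heD₀⟩ := (hedges e).mp he
    have hv : ∀ D' ∈ 𝒟, e ∈ D'.edgeSet → D' = D₀ := by
      intro D' hD' heD'
      rcases hdisj D' hD' D₀ hD₀ with h | h
      · exact h
      · exfalso
        induction e using Sym2.ind with
        | _ a b =>
          have h1 : a ∈ D'.verts := D'.edge_vert ((D'.mem_edgeSet).mp heD')
          have h2 : a ∈ D₀.verts := D₀.edge_vert ((D₀.mem_edgeSet).mp heD₀)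
          exact Set.disjoint_left.mp h h1 h2
    rw [edgeWeight_eq_countP, Multiset.countP_eq_card_filter]
    have hnd : (𝒟'.filter (fun D => e ∈ D.edgeSet)).Nodup :=
      (Multiset.nodup_dedup 𝒟).filter _
    have hall : ∀ D' ∈ 𝒟'.filter (fun D => e ∈ D.edgeSet), D' = D₀ := by
      intro D' hD'
      rw [Multiset.mem_filter] at hD'
      exact hv D' ((hmem' D').mp hD'.1) hD'.2
    have hmemf : D₀ ∈ 𝒟'.filter (fun D => e ∈ D.edgeSet) :=
      Multiset.mem_filter.mpr ⟨(hmem' D₀).mpr hD₀, heD₀⟩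
    have hrep := Multiset.eq_replicate_card.mpr hall
    have hle1 := Multiset.nodup_iff_count_le_one.mp hnd D₀
    rw [hrep, Multiset.count_replicate_self] at hle1
    have hge1 : 0 < Multiset.card (𝒟'.filter (fun D => e ∈ D.edgeSet)) :=
      Multiset.card_pos_iff_exists_mem.mpr ⟨D₀, hmemf⟩
    omega
  have hw𝒟0 : ∀ e, e ∉ C.edgeSet → edgeWeight 𝒟' e = 0 := by
    intro e he
    rw [edgeWeight_eq_countP, Multiset.countP_eq_zero]
    intro D hD heD
    exact he ((hedges e).mpr ⟨D, (hmem' D).mp hD, heD⟩)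
  have hwsum : ∀ e, edgeWeight 𝒞 e = edgeWeight ℱ e + edgeWeight 𝒟' e := by
    intro e
    conv_lhs => rw [← hsplit]
    exact edgeWeight_add _ _ _
  have hwℱ : ∀ e ∈ G.edgeSet, edgeWeight ℱ e = 1 ∨ edgeWeight ℱ e = 2 := by
    intro e he
    have h2 := hcdc.2 e he
    rw [hwsum e] at h2
    by_cases hc : e ∈ C.edgeSet
    · left; rw [hw𝒟 e hc] at h2; omega
    · right; rw [hw𝒟0 e hc] at h2; omega
  refine ⟨ℱ, ⟨?_, ?_⟩, hwℱ, ?_⟩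
  · intro D hD; exact hcdc.1 D (Multiset.mem_of_le hℱle hD)
  · intro e he
    have hw := hwℱ e he
    by_contra hno
    push_neg at hno
    have hz : edgeWeight ℱ e = 0 := by
      rw [edgeWeight]
      apply Multiset.sum_eq_zero
      intro x hx
      rw [Multiset.mem_map] at hx
      obtain ⟨D, hD, rfl⟩ := hx
      simp [hno D hD]
    omega
  · have hC : coverLength 𝒞 = 2 * G.edgeSet.ncard := by
      rw [coverLength_eq_sum]
      have hc2 : ∀ e ∈ G.edgeSet.toFinset, edgeWeight 𝒞 e = 2 :=
        fun e he => hcdc.2 e (Set.mem_toFinset.mp he)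
      rw [Finset.sum_congr rfl hc2, Finset.sum_const, smul_eq_mul,
        Set.ncard_eq_toFinset_card', mul_comm]
    have hD : coverLength 𝒟' = C.edgeSet.ncard := by
      rw [coverLength_eq_sum]
      have hind : ∀ e ∈ G.edgeSet.toFinset,
          edgeWeight 𝒟' e = (if e ∈ C.edgeSet then 1 else 0) := by
        intro e _
        by_cases hc : e ∈ C.edgeSet
        · simp [hc, hw𝒟 e hc]
        · simp [hc, hw𝒟0 e hc]
      rw [Finset.sum_congr rfl hind]
      exact (ncard_edgeSet_eq_sum C).symm
    have hadd := coverLength_add ℱ 𝒟'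
    rw [hsplit] at hadd
    omega


end ShortCycleCovers
end

section
/- If G is a hamiltonian cubic graph with m edges then scc(G) = (4/3)m. -/
open scoped Classical

namespace ShortCycleCovers

variable {V : Type*}

/-!
Every vertex `v` of a cubic graph meets three edges, each lying on a member of the cover, while a
cycle through `v` contains only two of them; so `v` lies on at least two members. A cycle has as
many edges as vertices, hence the length of a cover, which is the number of incidences between
vertices and members, is at least `2n = 4m/3`.

Conversely, `3n = 2m` makes `n` even, so the edges of a hamiltonian cycle `H` alternate between two
perfect matchings; call one of them `M`. The edges outside `H` form a perfect matching as well, and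
together with `M` they form a 2-regular spanning subgraph, whose components are cycles of total
length `n`. These cycles and `H` cover every edge, with total length `2n`.
-/

open SimpleGraph

lemma _root_.SimpleGraph.sum_ncard_neighborSet [Fintype V] (K : SimpleGraph V) :
    ∑ v, (K.neighborSet v).ncard = 2 * K.edgeSet.ncard := by
  simp only [Set.ncard_eq_toFinset_card']
  exact K.sum_degrees_eq_twice_card_edges

lemma _root_.SimpleGraph.two_mul_ncard_edgeSet_of_regular [Fintype V] {K : SimpleGraph V} {r : ℕ}
    (hreg : ∀ v, (K.neighborSet v).ncard = r) : 2 * K.edgeSet.ncard = r * Fintype.card V := by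
  simp [← sum_ncard_neighborSet, hreg, mul_comm]

lemma _root_.SimpleGraph.Subgraph.ncard_edgeSet_eq_ncard_verts [Fintype V] {G : SimpleGraph V}
    {C : G.Subgraph} (h : ∀ v ∈ C.verts, (C.neighborSet v).ncard = 2) :
    C.edgeSet.ncard = C.verts.ncard := by
  have hdeg (v : V) : (C.spanningCoe.neighborSet v).ncard = if v ∈ C.verts then 2 else 0 := by
    split_ifs with hv
    · exact h v hv
    · exact (Set.ncard_eq_zero).mpr (Set.eq_empty_of_forall_notMem fun w hw => hv (C.edge_vert hw))
  have := sum_ncard_neighborSet C.spanningCoe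
  rw [Subgraph.edgeSet_spanningCoe, Finset.sum_congr rfl fun v _ => hdeg v, ← Finset.sum_filter,
    Finset.sum_const, smul_eq_mul, ← Set.ncard_coe_finset] at this
  simp only [Finset.coe_filter, Finset.mem_univ, true_and, Set.ofPred_mem_eq] at this
  omega

lemma _root_.SimpleGraph.sum_ncard_connectedComponent_supp [Fintype V] (K : SimpleGraph V) :
    ∑ c : K.ConnectedComponent, c.supp.ncard = Fintype.card V := by
  rw [← Finset.card_univ, Finset.card_eq_sum_card_fiberwise (f := K.connectedComponentMk)
    (t := Finset.univ) (fun _ _ => Finset.mem_coe.mpr (Finset.mem_univ _))]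
  refine Finset.sum_congr rfl fun c _ => ?_
  rw [Set.ncard_eq_toFinset_card']
  congr 1
  ext v
  simp [ConnectedComponent.mem_supp_iff]

lemma _root_.SimpleGraph.Subgraph.Connected.spanningCoe {G : SimpleGraph V} {C : G.Subgraph}
    (hC : C.Connected) (hspan : C.verts = Set.univ) : C.spanningCoe.Connected :=
  (C.spanningCoeEquivCoeOfSpanning fun v => hspan ▸ Set.mem_univ v).connected_iff.mpr hC.coe

lemma _root_.SimpleGraph.Subgraph.IsPerfectMatching.ncard_neighborSet_eq_one {G : SimpleGraph V}
    {M : G.Subgraph} (hM : M.IsPerfectMatching) (v : V) : (M.neighborSet v).ncard = 1 := by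
  obtain ⟨w, hw, hw_unique⟩ := Subgraph.isPerfectMatching_iff.mp hM v
  exact Set.ncard_eq_one.mpr ⟨w, Set.eq_singleton_iff_unique_mem.mpr ⟨hw, hw_unique⟩⟩

/-- Every other edge of a path of odd length, starting with the first one. -/
theorem _root_.SimpleGraph.Walk.exists_isMatching_verts_eq_support {G : SimpleGraph V} :
    ∀ {u v : V} (p : G.Walk u v), p.IsPath → Odd p.length →
      ∃ M : G.Subgraph, M.IsMatching ∧ M.verts = {w | w ∈ p.support}
  | _, _, .nil, _, hodd => by simp at hodd
  | _, _, .cons h .nil, _, _ => ⟨G.subgraphOfAdj h, .subgraphOfAdj h, by ext; simp⟩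
  | _, _, .cons h (.cons h' q), hp, hodd => by
    obtain ⟨M, hM, hMverts⟩ := SimpleGraph.Walk.exists_isMatching_verts_eq_support q
      hp.of_cons.of_cons (by simpa [parity_simps] using hodd)
    rw [Walk.cons_isPath_iff, Walk.cons_isPath_iff] at hp
    refine ⟨G.subgraphOfAdj h ⊔ M, (Subgraph.IsMatching.subgraphOfAdj h).sup hM ?_, ?_⟩
    · rw [(Subgraph.IsMatching.subgraphOfAdj h).support_eq_verts, hM.support_eq_verts, hMverts]
      simp_all
    · ext w
      simp [hMverts, or_assoc]

lemma _root_.SimpleGraph.Connected.exists_isHamiltonian_of_two_regular [Fintype V]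
    {H : SimpleGraph V} (hconn : H.Connected) (hreg : ∀ v, (H.neighborSet v).ncard = 2) :
    ∃ u v, ∃ q : H.Walk u v, q.IsHamiltonian := by
  obtain ⟨a⟩ := hconn.nonempty
  obtain ⟨p, hp, hverts⟩ := IsCycles.exists_cycle_toSubgraph_verts_eq_connectedComponentSupp
    (c := H.connectedComponentMk a) (fun v _ => hreg v) rfl
    (Set.nonempty_of_ncard_ne_zero (by simp [hreg]))
  refine ⟨_, _, p.tail, hp.isPath_tail.isHamiltonian_of_mem fun w => ?_⟩
  have hw : w ∈ p.support := by
    rw [← Walk.mem_verts_toSubgraph, hverts, ConnectedComponent.mem_supp_iff,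
      ConnectedComponent.eq]
    exact hconn w a
  rw [← p.cons_support_tail hp.not_nil, List.mem_cons] at hw
  rcases hw with rfl | hw
  · simpa [hp.not_nil] using p.end_mem_tail_support hp.not_nil
  · exact hw

lemma _root_.SimpleGraph.Connected.exists_isPerfectMatching_of_two_regular [Fintype V]
    {H : SimpleGraph V} (hconn : H.Connected) (hreg : ∀ v, (H.neighborSet v).ncard = 2)
    (heven : Even (Fintype.card V)) : ∃ M : H.Subgraph, M.IsPerfectMatching := by
  obtain ⟨u, v, q, hq⟩ := hconn.exists_isHamiltonian_of_two_regular hreg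
  have hodd : Odd q.length := by
    rw [hq.length_eq, Nat.odd_sub' (Fintype.card_pos_iff.mpr ⟨u⟩)]
    simpa [parity_simps] using heven
  obtain ⟨M, hM, hMverts⟩ := q.exists_isMatching_verts_eq_support hq.isPath hodd
  exact ⟨M, hM, fun w => by simp [hMverts, hq.mem_support w]⟩

lemma isCycleSub_toSubgraph {G : SimpleGraph V} {u : V} {p : G.Walk u u} (hp : p.IsCycle) :
    IsCycleSub p.toSubgraph :=
  ⟨p.toSubgraph_connected, fun _ hv => hp.ncard_neighborSet_toSubgraph_eq_two
    (p.mem_verts_toSubgraph.mp hv)⟩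

lemma two_le_card_filter_mem_verts {G : SimpleGraph V} (hcubic : IsCubic G)
    {𝒞 : Multiset G.Subgraph} (h𝒞 : IsCycleCover G 𝒞) (v : V) :
    2 ≤ (𝒞.filter (v ∈ ·.verts)).card := by
  obtain ⟨x, y, z, hxy, hxz, hyz, hN⟩ := Set.ncard_eq_three.mp (hcubic v)
  have hcover (w : V) (hw : w ∈ G.neighborSet v) : ∃ C ∈ 𝒞, C.Adj v w := h𝒞.2 s(v, w) hw
  obtain ⟨Cx, hCx, hx⟩ := hcover x (by simp [hN])
  obtain ⟨Cy, hCy, hy⟩ := hcover y (by simp [hN])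
  obtain ⟨Cz, hCz, hz⟩ := hcover z (by simp [hN])
  have hnot_all_eq : ¬ (Cx = Cy ∧ Cx = Cz) := by
    rintro ⟨rfl, rfl⟩
    have hsub : {x, y, z} ⊆ Cx.neighborSet v := by
      simp [Set.insert_subset_iff, hx, hy, hz]
    have hdeg := (h𝒞.1 Cx hCx).2 v hx.fst_mem
    have := Set.ncard_le_ncard hsub (Set.finite_of_ncard_ne_zero (by omega))
    rw [Set.ncard_eq_three.mpr ⟨x, y, z, hxy, hxz, hyz, rfl⟩, hdeg] at this
    omega
  obtain ⟨A, hA, hvA, B, hB, hvB, hAB⟩ : ∃ A ∈ 𝒞, v ∈ A.verts ∧ ∃ B ∈ 𝒞, v ∈ B.verts ∧ A ≠ B := by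
    by_cases hxy : Cx = Cy
    · exact ⟨Cx, hCx, hx.fst_mem, Cz, hCz, hz.fst_mem, fun h => hnot_all_eq ⟨hxy, h⟩⟩
    · exact ⟨Cx, hCx, hx.fst_mem, Cy, hCy, hy.fst_mem, hxy⟩
  calc 2 ≤ (𝒞.filter (v ∈ ·.verts)).toFinset.card :=
        Finset.one_lt_card.mpr ⟨A, by simp [hA, hvA], B, by simp [hB, hvB], hAB⟩
    _ ≤ _ := Multiset.toFinset_card_le _

lemma coverLength_eq_sum_card_filter_mem_verts [Fintype V] {G : SimpleGraph V}
    {𝒞 : Multiset G.Subgraph} (h𝒞 : ∀ C ∈ 𝒞, IsCycleSub C) :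
    coverLength 𝒞 = ∑ v, (𝒞.filter (v ∈ ·.verts)).card := by
  induction 𝒞 using Multiset.induction_on with
  | empty => simp [coverLength]
  | cons C 𝒞 ih =>
    have hC := Subgraph.ncard_edgeSet_eq_ncard_verts (h𝒞 C (Multiset.mem_cons_self C 𝒞)).2
    simp only [coverLength, Multiset.map_cons, Multiset.sum_cons, Multiset.filter_cons,
      Multiset.card_add] at ih ⊢
    rw [ih fun D hD => h𝒞 D (Multiset.mem_cons_of_mem hD), Finset.sum_add_distrib, hC]
    simp [apply_ite Multiset.card, Set.ncard_eq_toFinset_card']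

lemma two_mul_card_le_coverLength [Fintype V] {G : SimpleGraph V} (hcubic : IsCubic G)
    {𝒞 : Multiset G.Subgraph} (h𝒞 : IsCycleCover G 𝒞) : 2 * Fintype.card V ≤ coverLength 𝒞 := by
  rw [coverLength_eq_sum_card_filter_mem_verts h𝒞.1]
  calc 2 * Fintype.card V = ∑ _v : V, 2 := by simp [mul_comm]
    _ ≤ _ := Finset.sum_le_sum fun v _ => two_le_card_filter_mem_verts hcubic h𝒞 v

lemma exists_cycles_covering_of_two_regular [Fintype V] {G K : SimpleGraph V} (hKG : K ≤ G)
    (hreg : ∀ v, (K.neighborSet v).ncard = 2) :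
    ∃ 𝒞 : Multiset G.Subgraph, (∀ C ∈ 𝒞, IsCycleSub C) ∧
      (∀ e ∈ K.edgeSet, ∃ C ∈ 𝒞, e ∈ C.edgeSet) ∧ coverLength 𝒞 = Fintype.card V := by
  have hcyc : K.IsCycles := fun v _ => hreg v
  have hcycle (c : K.ConnectedComponent) :
      ∃ p : K.Walk c.out c.out, p.IsCycle ∧ p.toSubgraph.verts = c.supp :=
    hcyc.exists_cycle_toSubgraph_verts_eq_connectedComponentSupp c.out_eq
      (Set.nonempty_of_ncard_ne_zero (by simp [hreg]))
  choose p hp hverts using hcycle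
  set cycleOf : K.ConnectedComponent → G.Subgraph := fun c => ((p c).mapLe hKG).toSubgraph
  have hcycleOf (c : K.ConnectedComponent) : IsCycleSub (cycleOf c) :=
    isCycleSub_toSubgraph ((hp c).mapLe hKG)
  refine ⟨Finset.univ.val.map cycleOf, ?_, ?_, ?_⟩
  · simp only [Multiset.mem_map]
    rintro _ ⟨c, -, rfl⟩
    exact hcycleOf c
  · intro e he
    induction e using Sym2.ind with
    | h v w =>
      refine ⟨_, Multiset.mem_map_of_mem _ (Finset.mem_univ_val (K.connectedComponentMk v)), ?_⟩
      rw [Walk.mem_edges_toSubgraph, Walk.edges_mapLe_eq_edges, ← Walk.mem_edges_toSubgraph]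
      exact ((hp _).adj_toSubgraph_iff_of_isCycles hcyc (by rw [hverts]; rfl) w).mpr he
  · have hlen (c : K.ConnectedComponent) : (cycleOf c).edgeSet.ncard = c.supp.ncard := by
      rw [Subgraph.ncard_edgeSet_eq_ncard_verts (hcycleOf c).2, ← hverts, Walk.verts_toSubgraph,
        Walk.verts_toSubgraph, Walk.support_mapLe_eq_support]
    simp only [coverLength, Multiset.map_map, Function.comp_def, hlen]
    exact sum_ncard_connectedComponent_supp K

lemma exists_cycleCover_of_hamiltonian [Fintype V] {G : SimpleGraph V} (hcubic : IsCubic G)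
    {C : G.Subgraph} (hC : IsCycleSub C) (hspan : C.verts = Set.univ) :
    ∃ 𝒞 : Multiset G.Subgraph, IsCycleCover G 𝒞 ∧ coverLength 𝒞 = 2 * Fintype.card V := by
  set H := C.spanningCoe
  have hHreg (v : V) : (H.neighborSet v).ncard = 2 := hC.2 v (hspan ▸ Set.mem_univ v)
  have heven : Even (Fintype.card V) := by
    have := two_mul_ncard_edgeSet_of_regular hcubic
    rw [Nat.even_iff]
    omega
  obtain ⟨M, hM⟩ := (hC.1.spanningCoe hspan).exists_isPerfectMatching_of_two_regular hHreg heven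
  set K := (G \ H) ⊔ M.spanningCoe
  have hKG : K ≤ G := sup_le sdiff_le (M.spanningCoe_le.trans C.spanningCoe_le)
  have hKreg (v : V) : (K.neighborSet v).ncard = 2 := by
    have hsub : H.neighborSet v ⊆ G.neighborSet v := fun _ hw => C.adj_sub hw
    have hchord : ((G \ H).neighborSet v).ncard = 1 := by
      rw [neighborSet_sdiff, Set.ncard_sdiff hsub, hcubic, hHreg]
    have hdisj : Disjoint ((G \ H).neighborSet v) (M.spanningCoe.neighborSet v) :=
      Set.disjoint_left.mpr fun w hw hw' => hw.2 (M.adj_sub hw')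
    rw [neighborSet_sup, Set.ncard_union_eq hdisj, hchord]
    exact congrArg (1 + ·) (hM.ncard_neighborSet_eq_one v)
  obtain ⟨𝒞, hcyc, hcov, hlen⟩ := exists_cycles_covering_of_two_regular hKG hKreg
  refine ⟨C ::ₘ 𝒞, ⟨?_, fun e he => ?_⟩, ?_⟩
  · simpa [hC] using hcyc
  · by_cases heC : e ∈ C.edgeSet
    · exact ⟨C, Multiset.mem_cons_self _ _, heC⟩
    · obtain ⟨D, hD, heD⟩ := hcov e (by
        rw [edgeSet_sup, edgeSet_sdiff, Subgraph.edgeSet_spanningCoe]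
        exact Or.inl ⟨he, heC⟩)
      exact ⟨D, Multiset.mem_cons_of_mem hD, heD⟩
  · rw [coverLength, Multiset.map_cons, Multiset.sum_cons, ← coverLength, hlen,
      Subgraph.ncard_edgeSet_eq_ncard_verts hC.2, hspan, Set.ncard_univ, Nat.card_eq_fintype_card,
      two_mul]

/-- A hamiltonian cubic graph has `scc G = (4/3)m`. -/
theorem statement4 [Fintype V] (G : SimpleGraph V) (hcubic : IsCubic G)
    (hham : ∃ C : G.Subgraph, IsCycleSub C ∧ C.verts = Set.univ) :
    3 * scc G = 4 * G.edgeSet.ncard := by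
  obtain ⟨C, hC, hspan⟩ := hham
  obtain ⟨𝒞, h𝒞, hlen⟩ := exists_cycleCover_of_hamiltonian hcubic hC hspan
  have hscc : scc G = 2 * Fintype.card V :=
    le_antisymm (Nat.sInf_le ⟨𝒞, h𝒞, hlen⟩)
      (le_csInf ⟨_, 𝒞, h𝒞, hlen⟩ fun _ ⟨_, h𝒟, hL⟩ => hL ▸ two_mul_card_le_coverLength hcubic h𝒟)
  have := two_mul_ncard_edgeSet_of_regular hcubic
  omega

end ShortCycleCovers
end
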